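/- arXiv:2305.18417 — 5 statements merged into one kernel-verified Lean document; each statement's English description precedes it below -/
import Mathlib

section
/- Let N be a positive integer, let V be an N×N positive semidefinite real matrix, and let w ∈ [0,1]^N. Then the weighted sum over all subsets x of {1,…,N} of (∏_{i∈x} w_i)·(∏_{i∉x} (1−w_i))·det(V_x) equals det(diag(w)·(V − I) + I), where V_x denotes the principal submatrix of V indexed by x and det(V_∅) = 1. -/
open Matrix BigOperators

noncomputable def principalSubdet {N : ℕ} (V : Matrix (Fin N) (Fin N) ℝ)
    (x : Finset (Fin N)) : ℝ :=
  (V.submatrix (fun i : x => (i : Fin N)) (fun i : x => (i : Fin N))).det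

lemma det_eq_principalSubdet {N : ℕ} (M : Matrix (Fin N) (Fin N) ℝ) (x : Finset (Fin N))
    (h : ∀ i ∉ x, ∀ j, M i j = (1 : Matrix (Fin N) (Fin N) ℝ) i j) :
    M.det = principalSubdet M x := by
  classical
  let e : {i // i ∈ x} ⊕ {i // i ∉ x} ≃ Fin N := Equiv.sumCompl (· ∈ x)
  have hsub : M.submatrix e e =
      Matrix.fromBlocks (M.submatrix (fun i : x => (i : Fin N)) (fun i : x => (i : Fin N)))
        (M.submatrix (fun i : x => (i : Fin N)) (fun i : {i // i ∉ x} => (i : Fin N)))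
        0 1 := by
    ext i j
    cases i with
    | inl i =>
      cases j with
      | inl j => rfl
      | inr j => rfl
    | inr i =>
      cases j with
      | inl j =>
        simp only [Matrix.fromBlocks_apply₂₁, Matrix.zero_apply, Matrix.submatrix_apply]
        have := h i i.2 j
        rw [Matrix.one_apply] at this
        have hne : (i : Fin N) ≠ (j : Fin N) := by
          intro hij
          exact i.2 (hij ▸ j.2)
        simpa [e, hne] using this
      | inr j =>
        simp only [Matrix.fromBlocks_apply₂₂, Matrix.submatrix_apply]
        have := h i i.2 j
        rw [Matrix.one_apply] at this
        rw [Matrix.one_apply]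
        simpa [e, Subtype.ext_iff] using this
  rw [← Matrix.det_submatrix_equiv_self e M, hsub, Matrix.det_fromBlocks_zero₂₁]
  simp [principalSubdet]

/-- The multilinear extension identity for DPPs (Theorem 1 of the paper):
for a positive semidefinite `V` and `w ∈ [0,1]^N`,
`∑_{x ⊆ {1,…,N}} (∏_{i∈x} w_i)(∏_{i∉x} (1-w_i)) det(V_x) = det(diag(w)(V - I) + I)`. -/
theorem dpp_multilinear_extension (N : ℕ) (hN : 0 < N)
    (V : Matrix (Fin N) (Fin N) ℝ) (hV : V.PosSemidef)
    (w : Fin N → ℝ) (hw : ∀ i, w i ∈ Set.Icc (0 : ℝ) 1) :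
    ∑ x : Finset (Fin N),
        (∏ i ∈ x, w i) * (∏ i ∈ xᶜ, (1 - w i)) * principalSubdet V x
      = (Matrix.diagonal w * (V - 1) + 1).det := by
  classical
  have hM : (Matrix.diagonal w * (V - 1) + 1) =
      Matrix.of (fun i => w i • V i + (1 - w i) • (1 : Matrix (Fin N) (Fin N) ℝ) i) := by
    ext i j
    simp [Matrix.mul_apply, Matrix.one_apply, Matrix.diagonal, Matrix.sub_apply]
    by_cases hij : i = j <;> simp [hij] <;> ring
  rw [hM]
  have expand := (Matrix.detRowAlternating (R := ℝ) (n := Fin N)).toMultilinearMap.map_add_univ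
    (fun i => w i • V i) (fun i => (1 - w i) • (1 : Matrix (Fin N) (Fin N) ℝ) i)
  have hdet : (Matrix.of (fun i => w i • V i + (1 - w i) • (1 : Matrix (Fin N) (Fin N) ℝ) i)).det
      = ∑ s : Finset (Fin N),
          Matrix.detRowAlternating (s.piecewise (fun i => w i • V i)
            (fun i => (1 - w i) • (1 : Matrix (Fin N) (Fin N) ℝ) i)) := by
    exact expand
  rw [hdet]
  refine Finset.sum_congr rfl fun s _ => ?_
  have hpw : (s.piecewise (fun i => w i • V i)
        (fun i => (1 - w i) • (1 : Matrix (Fin N) (Fin N) ℝ) i))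
      = fun i => (if i ∈ s then w i else (1 - w i)) •
          (s.piecewise V (1 : Matrix (Fin N) (Fin N) ℝ)) i := by
    funext i
    by_cases hi : i ∈ s <;> simp [Finset.piecewise, hi]
  have hsmul := (Matrix.detRowAlternating (R := ℝ) (n := Fin N)).toMultilinearMap.map_smul_univ
    (fun i => if i ∈ s then w i else (1 - w i))
    (s.piecewise V (1 : Matrix (Fin N) (Fin N) ℝ))
  have hprod : (∏ i, (if i ∈ s then w i else (1 - w i)))
      = (∏ i ∈ s, w i) * (∏ i ∈ sᶜ, (1 - w i)) := by
    rw [Finset.prod_ite]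
    simp [Finset.filter_mem_eq_inter, Finset.compl_eq_univ_sdiff, Finset.filter_not]
  have hbase : Matrix.detRowAlternating (s.piecewise V (1 : Matrix (Fin N) (Fin N) ℝ))
      = principalSubdet V s := by
    have h1 : (Matrix.of (s.piecewise V (1 : Matrix (Fin N) (Fin N) ℝ))).det
        = principalSubdet (Matrix.of (s.piecewise V (1 : Matrix (Fin N) (Fin N) ℝ))) s := by
      apply det_eq_principalSubdet
      intro i hi j
      simp [Finset.piecewise, hi]
    have h2 : principalSubdet (Matrix.of (s.piecewise V (1 : Matrix (Fin N) (Fin N) ℝ))) s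
        = principalSubdet V s := by
      unfold principalSubdet
      congr 1
      ext i j
      simp [Finset.piecewise, i.2]
    rw [← h2]
    exact h1
  rw [hpw]
  erw [hsmul]
  rw [hprod]
  erw [hbase]
  rw [smul_eq_mul]
end

section
/- Let V be an N×N real positive semidefinite matrix. Then the map x ↦ det(V_x)/det(V + I), defined on subsets x of {1,…,N}, is a probability mass function: each value is nonnegative and the values sum to 1 over all subsets of {1,…,N}. In particular det(V + I) ≥ 1 > 0. -/
open Matrix BigOperators

/-! Expanding `det (M + 1)` multilinearly in the rows, each choice of rows `s` taken from `M`
(the rest from `1`) contributes the principal minor of `M` on `s`. For positive semidefinite `V`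
all these minors are nonnegative and the empty one is `1`. -/

theorem Matrix.det_add_one_eq_sum_det_submatrix {n R : Type*} [Fintype n] [DecidableEq n]
    [CommRing R] (M : Matrix n n R) :
    (M + 1).det = ∑ s : Finset n, (M.submatrix ((↑) : s → n) (↑)).det := by
  simp_rw [← det_piecewise_one_eq_submatrix_det]
  exact detRowAlternating.map_add_univ M.row (1 : Matrix n n R).row

section

variable {N : ℕ} {V : Matrix (Fin N) (Fin N) ℝ}

theorem principalSubdet_nonneg (hV : V.PosSemidef) (x : Finset (Fin N)) :
    0 ≤ principalSubdet V x :=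
  (hV.submatrix _).det_nonneg

variable (V)

theorem principalSubdet_empty : principalSubdet V ∅ = 1 :=
  det_isEmpty

theorem sum_principalSubdet : ∑ x : Finset (Fin N), principalSubdet V x = (V + 1).det :=
  (det_add_one_eq_sum_det_submatrix V).symm

end

/-- For positive semidefinite `V`, the map `x ↦ det(V_x)/det(V + I)` is a probability
mass function on subsets of `{1,…,N}`: each value is nonnegative and the values sum
to `1`; in particular `det(V + I) ≥ 1 > 0`. -/
theorem dpp_is_probability_measure (N : ℕ) (V : Matrix (Fin N) (Fin N) ℝ)
    (hV : V.PosSemidef) :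
    (∀ x : Finset (Fin N), 0 ≤ principalSubdet V x / (V + 1).det) ∧
      (∑ x : Finset (Fin N), principalSubdet V x / (V + 1).det = 1) ∧
      1 ≤ (V + 1).det ∧ 0 < (V + 1).det := by
  have hge : 1 ≤ (V + 1).det :=
    calc (1 : ℝ) = principalSubdet V ∅ := (principalSubdet_empty V).symm
      _ ≤ ∑ x : Finset (Fin N), principalSubdet V x :=
        Finset.single_le_sum (fun x _ => principalSubdet_nonneg hV x) (Finset.mem_univ ∅)
      _ = (V + 1).det := sum_principalSubdet V
  have hpos : 0 < (V + 1).det := one_pos.trans_le hge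
  refine ⟨fun x => div_nonneg (principalSubdet_nonneg hV x) hpos.le, ?_, hge, hpos⟩
  rw [← Finset.sum_div, sum_principalSubdet, div_self hpos.ne']
end

section
/- Let V be an N×N real positive semidefinite matrix and let w ∈ [0,1]^N. Then det(diag(w)·(V − I) + I) ≥ ∏_{i=1}^N (1 − w_i); in particular det(diag(w)·(V − I) + I) ≥ 0, and it is strictly positive whenever w_i < 1 for all i. -/
/-!
When every `w i < 1`, `diag(w)(V - 1) + 1 = diag(1 - w) (1 + diag(c) V)` with `c = w / (1 - w) ≥ 0`.
By Sylvester's determinant identity `det (1 + diag(c) V) = det (1 + diag(√c) V diag(√c)) ≥ 1`,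
as the eigenvalues of `1` plus a positive semidefinite matrix are at least `1`. The bound for
`w ∈ [0,1]^N` follows by continuity, letting `t ↑ 1` in the bound for `t • w`.
-/

open Matrix Pointwise

namespace Matrix

variable {n : Type*} [Fintype n] [DecidableEq n]

theorem PosSemidef.one_le_det_one_add {P : Matrix n n ℝ} (hP : P.PosSemidef) :
    1 ≤ det (1 + P) := by
  have hH : (1 + P).IsHermitian := isHermitian_one.add hP.isHermitian
  rw [hH.det_eq_prod_eigenvalues]
  refine Finset.one_le_prod fun i _ ↦ ?_
  have hmem : hH.eigenvalues i ∈ ({1} : Set ℝ) + spectrum ℝ P := by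
    rw [spectrum.singleton_add_eq, map_one]
    exact hH.eigenvalues_mem_spectrum_real i
  obtain ⟨_, rfl, ν, hν, hsum⟩ := hmem
  have hν₀ : 0 ≤ ν := (posSemidef_iff_isHermitian_and_spectrum_nonneg.mp hP).2 hν
  simp only [RCLike.ofReal_real_eq_id, id, ← hsum]
  linarith

theorem PosSemidef.one_le_det_one_add_diagonal_mul {V : Matrix n n ℝ} (hV : V.PosSemidef)
    {c : n → ℝ} (hc : 0 ≤ c) : 1 ≤ det (1 + diagonal c * V) := by
  set s : n → ℝ := fun i ↦ √(c i)
  have hcs : diagonal c = diagonal s * diagonal s := by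
    rw [diagonal_mul_diagonal]
    exact congrArg diagonal (funext fun i ↦ (Real.mul_self_sqrt (hc i)).symm)
  rw [hcs, mul_assoc, det_one_add_mul_comm]
  simpa using (hV.mul_mul_conjTranspose_same (diagonal s)).one_le_det_one_add

theorem diagonal_mul_sub_one_add_one_eq {K : Type*} [Field K] (V : Matrix n n K) {w : n → K}
    (hw : ∀ i, w i ≠ 1) :
    diagonal w * (V - 1) + 1 = diagonal (1 - w) * (1 + diagonal (w / (1 - w)) * V) := by
  have hw' : ∀ i, 1 - w i ≠ 0 := fun i ↦ sub_ne_zero.mpr (hw i).symm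
  rw [mul_add, ← mul_assoc, diagonal_mul_diagonal, mul_one, mul_sub, mul_one]
  have hcancel : (fun i ↦ (1 - w) i * (w / (1 - w)) i) = w :=
    funext fun i ↦ mul_div_cancel₀ (w i) (hw' i)
  rw [hcancel, show diagonal (1 - w) = diagonal 1 - diagonal w from (diagonal_sub 1 w).symm,
    diagonal_one']
  abel

theorem prod_one_sub_le_det_diagonal_mul_sub_one_add_one_of_lt_one {V : Matrix n n ℝ}
    (hV : V.PosSemidef) {w : n → ℝ} (hw₀ : 0 ≤ w) (hw₁ : ∀ i, w i < 1) :
    ∏ i, (1 - w i) ≤ det (diagonal w * (V - 1) + 1) := by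
  have hpos : ∀ i, 0 < 1 - w i := fun i ↦ sub_pos.mpr (hw₁ i)
  rw [diagonal_mul_sub_one_add_one_eq V fun i ↦ (hw₁ i).ne, det_mul, det_diagonal]
  refine le_mul_of_one_le_right (Finset.prod_nonneg fun i _ ↦ (hpos i).le) ?_
  exact hV.one_le_det_one_add_diagonal_mul fun i ↦ div_nonneg (hw₀ i) (hpos i).le

theorem prod_one_sub_le_det_diagonal_mul_sub_one_add_one {V : Matrix n n ℝ}
    (hV : V.PosSemidef) {w : n → ℝ} (hw : ∀ i, w i ∈ Set.Icc (0 : ℝ) 1) :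
    ∏ i, (1 - w i) ≤ det (diagonal w * (V - 1) + 1) := by
  have hcont : Continuous fun t : ℝ ↦ det (diagonal (t • w) * (V - 1) + 1) := by
    fun_prop
  have hclosure := le_on_closure (s := Set.Ico (0 : ℝ) 1) (f := fun t : ℝ ↦ ∏ i, (1 - t * w i))
    (fun t ht ↦ ?_) (by fun_prop) hcont.continuousOn
    (by rw [closure_Ico zero_ne_one]; exact ⟨zero_le_one, le_rfl⟩)
  · simpa using hclosure
  refine prod_one_sub_le_det_diagonal_mul_sub_one_add_one_of_lt_one hV
    (fun i ↦ mul_nonneg ht.1 (hw i).1) fun i ↦ ?_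
  calc t * w i ≤ t := mul_le_of_le_one_right ht.1 (hw i).2
    _ < 1 := ht.2

end Matrix

/-- For positive semidefinite `V` and `w ∈ [0,1]^N`, the continuous extension
`det(diag(w)(V - I) + I)` is bounded below by `∏_i (1 - w_i)`; in particular it is
nonnegative, and strictly positive whenever `w_i < 1` for all `i`. -/
theorem dpp_continuous_extension_pos (N : ℕ) (V : Matrix (Fin N) (Fin N) ℝ)
    (hV : V.PosSemidef) (w : Fin N → ℝ) (hw : ∀ i, w i ∈ Set.Icc (0 : ℝ) 1) :
    (∏ i : Fin N, (1 - w i)) ≤ (Matrix.diagonal w * (V - 1) + 1).det ∧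
      0 ≤ (Matrix.diagonal w * (V - 1) + 1).det ∧
      ((∀ i, w i < 1) → 0 < (Matrix.diagonal w * (V - 1) + 1).det) := by
  have hbound := prod_one_sub_le_det_diagonal_mul_sub_one_add_one hV hw
  have hprod : 0 ≤ ∏ i, (1 - w i) := Finset.prod_nonneg fun i _ ↦ sub_nonneg.mpr (hw i).2
  refine ⟨hbound, hprod.trans hbound, fun hlt ↦ ?_⟩
  exact (Finset.prod_pos fun i _ ↦ sub_pos.mpr (hlt i)).trans_le hbound
end

section
/- Let V be an N×N real positive definite matrix. Then the set function f(x) = log det(V_x) on subsets x of {1,…,N} (with f(∅) = 0) is submodular: for all subsets x ⊆ y ⊆ {1,…,N} and every index i ∈ {1,…,N} with i ∉ y, one has f(x ∪ {i}) − f(x) ≥ f(y ∪ {i}) − f(y). -/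
open Matrix BigOperators

/-!
For `i ∉ z` the Schur complement `s(z) = V_ii - V_{z,i}ᵀ V_z⁻¹ V_{z,i}` satisfies
`det V_{z ∪ {i}} = det V_z * s(z)`, so `f(z ∪ {i}) - f(z) = log s(z)`. Completing the square in
the block form of `V_{z ∪ {i}}` shows that `s(z)` is the minimum of `uᵀ V u` over the vectors `u`
with `u i = 1` supported in `z ∪ {i}`. Enlarging `z` enlarges this set of competitors, so `s` is
antitone in `z`.
-/

namespace Matrix

section Schur

variable {m n : Type*} [Fintype m] [Fintype n] [DecidableEq m]

theorem PosDef.schur_le_dotProduct_fromBlocks {A : Matrix m m ℝ} (hA : A.PosDef)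
    (B : Matrix m n ℝ) (D : Matrix n n ℝ) (x : m → ℝ) (y : n → ℝ) :
    y ⬝ᵥ (D - Bᵀ * A⁻¹ * B) *ᵥ y ≤ (x ⊕ᵥ y) ⬝ᵥ fromBlocks A B Bᵀ D *ᵥ (x ⊕ᵥ y) := by
  have := hA.isUnit.invertible
  have h := schur_complement_eq₁₁ B D x y hA.isHermitian
  simp only [star_trivial, conjTranspose_eq_transpose_of_trivial, ← dotProduct_mulVec] at h
  rw [h]
  exact le_add_of_nonneg_left (by simpa only [star_trivial] using
    hA.posSemidef.dotProduct_mulVec_nonneg _)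

theorem dotProduct_fromBlocks_mulVec_eq_schur {A : Matrix m m ℝ} (hA : A.IsHermitian)
    [Invertible A] (B : Matrix m n ℝ) (D : Matrix n n ℝ) (y : n → ℝ) :
    (-((A⁻¹ * B) *ᵥ y) ⊕ᵥ y) ⬝ᵥ fromBlocks A B Bᵀ D *ᵥ (-((A⁻¹ * B) *ᵥ y) ⊕ᵥ y) =
      y ⬝ᵥ (D - Bᵀ * A⁻¹ * B) *ᵥ y := by
  have h := schur_complement_eq₁₁ B D (-((A⁻¹ * B) *ᵥ y)) y hA
  simp only [star_trivial, conjTranspose_eq_transpose_of_trivial, neg_add_cancel, zero_vecMul,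
    zero_dotProduct, zero_add] at h
  rw [dotProduct_mulVec, h, dotProduct_mulVec]

end Schur

variable {ι κ R : Type*}

def principalSubmatrix (V : Matrix ι ι R) (s : Finset ι) : Matrix s s R :=
  V.submatrix (↑) (↑)

theorem dotProduct_mulVec_eq_submatrix_of_injective [Fintype ι] [Fintype κ]
    [NonUnitalNonAssocSemiring R] {f : κ → ι} (hf : f.Injective) (V : Matrix ι ι R)
    {u : ι → R} (hu : ∀ a ∉ Set.range f, u a = 0) :
    u ⬝ᵥ V *ᵥ u = (u ∘ f) ⬝ᵥ V.submatrix f f *ᵥ (u ∘ f) := by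
  have hsum : ∀ g : ι → R, (∀ a ∉ Set.range f, g a = 0) → ∑ a, g a = ∑ k, g (f k) :=
    fun g hg => (Fintype.sum_of_injective f hf _ g hg fun _ => rfl).symm
  simp only [dotProduct, mulVec]
  rw [hsum _ fun a ha => by simp [hu a ha]]
  simp only [Function.comp_apply, submatrix_apply]
  congr! 2 with k
  exact hsum _ fun a ha => by simp [hu a ha]

theorem det_submatrix_eq_of_range_eq [Fintype κ] [CommRing R] [DecidableEq ι] [DecidableEq κ]
    {f : κ → ι} (hf : f.Injective) {s : Finset ι} (hs : Set.range f = s) (V : Matrix ι ι R) :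
    (V.submatrix f f).det = (principalSubmatrix V s).det :=
  det_submatrix_equiv_self ((Equiv.ofInjective f hf).trans (Equiv.setCongr hs))
    (V.principalSubmatrix s)

theorem PosDef.principalSubmatrix [Ring R] [PartialOrder R] [StarRing R] {V : Matrix ι ι R}
    (hV : V.PosDef) (s : Finset ι) :
    (V.principalSubmatrix s).PosDef :=
  hV.submatrix Subtype.val_injective

end Matrix

section InsertIndex

variable {ι : Type*} (V : Matrix ι ι ℝ) (z : Finset ι) (i : ι)

def insertIndex : z ⊕ Unit → ι := Sum.elim (↑) fun _ => i

variable {z i} in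
theorem insertIndex_injective (hi : i ∉ z) : (insertIndex z i).Injective :=
  Subtype.val_injective.sumElim (fun _ _ _ => rfl) fun j _ h => hi (h ▸ j.2)

theorem range_insertIndex [DecidableEq ι] : Set.range (insertIndex z i) = ↑(insert i z) := by
  simp [insertIndex, Set.Sum.elim_range, Set.union_singleton]

variable {z i} in
theorem submatrix_insertIndex {V : Matrix ι ι ℝ} (hV : V.IsHermitian) :
    V.submatrix (insertIndex z i) (insertIndex z i) =
      fromBlocks (principalSubmatrix V z) (replicateCol Unit fun j : z => V j i)
        (replicateCol Unit fun j : z => V j i)ᵀ (V.submatrix (fun _ => i) fun _ => i) := by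
  ext (j | _) (k | _)
  · rfl
  · rfl
  · simpa [insertIndex] using (hV.apply i k).symm
  · rfl

variable [DecidableEq ι]

noncomputable def schurCompl : ℝ :=
  V i i - (fun j : z => V j i) ⬝ᵥ (principalSubmatrix V z)⁻¹ *ᵥ fun j : z => V j i

theorem one_dotProduct_schur_mulVec_one :
    (1 : Unit → ℝ) ⬝ᵥ (V.submatrix (fun _ => i) (fun _ => i) -
      (replicateCol Unit fun j : z => V j i)ᵀ * (principalSubmatrix V z)⁻¹ *
        replicateCol Unit fun j : z => V j i) *ᵥ 1 = schurCompl V z i := by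
  rw [Matrix.mul_assoc, ← replicateCol_mulVec, transpose_replicateCol]
  simp [schurCompl, dotProduct, mulVec, replicateRow_mul_replicateCol_apply]

variable {V z i}

theorem schurCompl_le_dotProduct_mulVec [Fintype ι] (hV : V.PosDef) (hi : i ∉ z) {u : ι → ℝ}
    (hui : u i = 1) (hu : ∀ a ∉ insert i z, u a = 0) : schurCompl V z i ≤ u ⬝ᵥ V *ᵥ u := by
  have hrestrict : u ∘ insertIndex z i = (fun j : z => u j) ⊕ᵥ 1 := by
    ext (j | _)
    · rfl
    · exact hui
  rw [dotProduct_mulVec_eq_submatrix_of_injective (insertIndex_injective hi) V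
      (by simpa [range_insertIndex] using hu), hrestrict, submatrix_insertIndex hV.isHermitian,
    ← one_dotProduct_schur_mulVec_one]
  exact (hV.principalSubmatrix z).schur_le_dotProduct_fromBlocks _ _ _ _

theorem exists_dotProduct_mulVec_eq_schurCompl [Fintype ι] (hV : V.PosDef) (hi : i ∉ z) :
    ∃ u : ι → ℝ, u i = 1 ∧ (∀ a ∉ insert i z, u a = 0) ∧ u ⬝ᵥ V *ᵥ u = schurCompl V z i := by
  have := (hV.principalSubmatrix z).isUnit.invertible
  have hinj := insertIndex_injective hi
  set v : z ⊕ Unit → ℝ :=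
    -(((principalSubmatrix V z)⁻¹ * replicateCol Unit fun j : z => V j i) *ᵥ 1) ⊕ᵥ 1
  have hsupp : ∀ a ∉ Set.range (insertIndex z i), Function.extend (insertIndex z i) v 0 a = 0 :=
    fun a ha => Function.extend_apply' _ _ _ ha
  refine ⟨_, hinj.extend_apply v 0 (.inr ()),
    fun a ha => hsupp a (by simpa [range_insertIndex] using ha), ?_⟩
  rw [dotProduct_mulVec_eq_submatrix_of_injective hinj V hsupp, Function.extend_comp hinj,
    submatrix_insertIndex hV.isHermitian,
    dotProduct_fromBlocks_mulVec_eq_schur (hV.principalSubmatrix z).isHermitian,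
    one_dotProduct_schur_mulVec_one]

theorem schurCompl_pos [Fintype ι] (hV : V.PosDef) (hi : i ∉ z) : 0 < schurCompl V z i := by
  obtain ⟨u, hui, -, hu⟩ := exists_dotProduct_mulVec_eq_schurCompl hV hi
  rw [← hu]
  simpa only [star_trivial] using hV.dotProduct_mulVec_pos (x := u) fun h => by simp [h] at hui

theorem schurCompl_antitone [Fintype ι] (hV : V.PosDef) {x y : Finset ι} (hxy : x ⊆ y)
    (hi : i ∉ y) : schurCompl V y i ≤ schurCompl V x i := by
  obtain ⟨u, hui, hu, hux⟩ := exists_dotProduct_mulVec_eq_schurCompl hV fun h => hi (hxy h)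
  exact hux ▸ schurCompl_le_dotProduct_mulVec hV hi hui fun a ha =>
    hu a fun h => ha (Finset.insert_subset_insert i hxy h)

end InsertIndex

theorem principalSubdet_eq_det {N : ℕ} (V : Matrix (Fin N) (Fin N) ℝ) (s : Finset (Fin N)) :
    principalSubdet V s = (principalSubmatrix V s).det :=
  rfl

theorem principalSubdet_insert {N : ℕ} {V : Matrix (Fin N) (Fin N) ℝ} (hV : V.PosDef)
    {z : Finset (Fin N)} {i : Fin N} (hi : i ∉ z) :
    principalSubdet V (insert i z) = principalSubdet V z * schurCompl V z i := by
  have := (hV.principalSubmatrix z).isUnit.invertible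
  have hdet := det_submatrix_eq_of_range_eq (insertIndex_injective hi) (range_insertIndex z i) V
  rw [submatrix_insertIndex hV.isHermitian, det_fromBlocks₁₁, invOf_eq_nonsing_inv,
    det_unique (n := Unit)] at hdet
  rw [← one_dotProduct_schur_mulVec_one]
  simpa [principalSubdet_eq_det, dotProduct, mulVec] using hdet.symm

/-- For positive definite `V`, the set function `f(x) = log det(V_x)` is submodular:
for `x ⊆ y` and `i ∉ y`, `f(x ∪ {i}) - f(x) ≥ f(y ∪ {i}) - f(y)`. -/
theorem logdet_submodular (N : ℕ) (V : Matrix (Fin N) (Fin N) ℝ) (hV : V.PosDef)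
    (x y : Finset (Fin N)) (hxy : x ⊆ y) (i : Fin N) (hi : i ∉ y) :
    Real.log (principalSubdet V (insert i x)) - Real.log (principalSubdet V x) ≥
      Real.log (principalSubdet V (insert i y)) - Real.log (principalSubdet V y) := by
  have hix : i ∉ x := fun h => hi (hxy h)
  have hdet_ne (s : Finset (Fin N)) : principalSubdet V s ≠ 0 :=
    principalSubdet_eq_det V s ▸ (hV.principalSubmatrix s).det_pos.ne'
  rw [principalSubdet_insert hV hix, principalSubdet_insert hV hi,
    Real.log_mul (hdet_ne x) (schurCompl_pos hV hix).ne',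
    Real.log_mul (hdet_ne y) (schurCompl_pos hV hi).ne', add_sub_cancel_left, add_sub_cancel_left]
  exact Real.log_le_log (schurCompl_pos hV hi) (schurCompl_antitone hV hxy hi)
end

section
/- Let V be an N×N real positive definite matrix, and for w ∈ [0,1]^N define F̂(w) = log ( Σ_{x ⊆ {1,…,N}} (∏_{i∈x} w_i)·(∏_{i∉x} (1−w_i))·exp(f(x)) ), where f(x) = log det(V_x) (with f(∅) = 0). Then F̂(w) = log det(diag(w)·(V − I) + I) for all w ∈ [0,1)^N. -/
open Matrix BigOperators

namespace Matrix

variable {n R : Type*} [Fintype n] [DecidableEq n] [CommRing R]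

/-- Each row of `diag(w)(M - 1) + 1` is `w i • Mᵢ + (1 - w i) • eᵢ`, so expanding the determinant
multilinearly in the rows picks, for every subset `s`, the rows of `M` indexed by `s`. -/
theorem det_diagonal_mul_sub_one_add_one (M : Matrix n n R) (w : n → R) :
    det (diagonal w * (M - 1) + 1) = ∑ s : Finset n,
      (∏ i ∈ s, w i) * (∏ i ∈ sᶜ, (1 - w i)) * (M.submatrix (↑) (↑) : Matrix s s R).det := by
  have hrows : diagonal w * (M - 1) + 1 =
      (fun i => w i • M i) + (fun i => (1 - w i) • (1 : Matrix n n R) i) := by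
    ext i j
    simp only [add_apply, diagonal_mul, sub_apply, Pi.add_apply, Pi.smul_apply, smul_eq_mul]
    ring
  rw [hrows]; change detRowAlternating _ = _
  rw [AlternatingMap.map_add_univ]
  refine Finset.sum_congr rfl fun s _ => ?_
  have hscale : s.piecewise (fun i => w i • M i) (fun i => (1 - w i) • (1 : Matrix n n R) i) =
      fun i => s.piecewise w (1 - w) i • s.piecewise M.row (1 : Matrix n n R).row i := by
    funext i
    by_cases hi : i ∈ s
    · simp only [Finset.piecewise_eq_of_mem _ _ _ hi]; rfl
    · simp only [Finset.piecewise_eq_of_notMem _ _ _ hi]; rfl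
  rw [hscale, AlternatingMap.map_smul_univ, Finset.prod_piecewise, Finset.univ_inter,
    ← Finset.compl_eq_univ_sdiff, smul_eq_mul]
  exact congrArg₂ (· * ·) rfl (det_piecewise_one_eq_submatrix_det M s)

end Matrix

theorem softmax_extension_eq_logdet_general (N : ℕ) (V : Matrix (Fin N) (Fin N) ℝ)
    (hV : V.PosDef) (w : Fin N → ℝ) :
    Real.log (∑ x : Finset (Fin N),
        (∏ i ∈ x, w i) * (∏ i ∈ xᶜ, (1 - w i)) *
          Real.exp (Real.log (principalSubdet V x)))
      = Real.log (Matrix.diagonal w * (V - 1) + 1).det := by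
  have hminor_pos (x : Finset (Fin N)) : 0 < principalSubdet V x :=
    (hV.submatrix Subtype.val_injective).det_pos
  simp only [Real.exp_log (hminor_pos _), det_diagonal_mul_sub_one_add_one]
  rfl

/-- For positive definite `V` and `w ∈ [0,1)^N`, the soft-max continuous extension
`F̂(w) = log ∑_x (∏_{i∈x} w_i)(∏_{i∉x} (1-w_i)) exp(f(x))` with `f(x) = log det(V_x)`
equals `log det(diag(w)(V - I) + I)`. -/
theorem softmax_extension_eq_logdet (N : ℕ) (V : Matrix (Fin N) (Fin N) ℝ)
    (hV : V.PosDef) (w : Fin N → ℝ) (hw : ∀ i, 0 ≤ w i ∧ w i < 1) :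
    Real.log (∑ x : Finset (Fin N),
        (∏ i ∈ x, w i) * (∏ i ∈ xᶜ, (1 - w i)) *
          Real.exp (Real.log (principalSubdet V x)))
      = Real.log (Matrix.diagonal w * (V - 1) + 1).det :=
  softmax_extension_eq_logdet_general N V hV w
end
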